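/- For every (x, u) in the original feasible set F₀, the triple (x, u, d) with d_i[t] := ‖G x_i[t]‖₂² for all i ∈ N and t ∈ T belongs to the relaxed feasible set F_P, and it has the same objective value J(u) = Σ_{t∈T} Σ_{i∈R} ‖u_i[t]‖_q. Consequently, the infimum of J over F_P is less than or equal to the infimum of J over F₀ (the parabolic relaxation is a valid relaxation). -/

import Mathlib

open Matrix Finset

/-- The Euclidean norm `‖v‖₂` of a vector `v ∈ ℝⁿ`. -/
noncomputable def enorm {n : ℕ} (v : Fin n → ℝ) : ℝ :=
  Real.sqrt (∑ k, (v k) ^ 2)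

/-- The squared Euclidean norm `‖v‖₂²` of a vector `v ∈ ℝⁿ`. -/
def sqnorm {n : ℕ} (v : Fin n → ℝ) : ℝ :=
  ∑ k, (v k) ^ 2

/-- The standard inner product `⟨v, w⟩` on `ℝⁿ`. -/
def iprod {n : ℕ} (v w : Fin n → ℝ) : ℝ :=
  ∑ k, v k * w k

/-- The `ℓ_p` norm `‖v‖_p = (∑ₖ |vₖ|^p)^(1/p)` on `ℝᵐ`. -/
noncomputable def pnorm {m : ℕ} (p : ℝ) (v : Fin m → ℝ) : ℝ :=
  (∑ k, |v k| ^ p) ^ (1 / p)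

/-- The matrix `G = [Iₙ 0ₙ] ∈ ℝ^{n×2n}` extracting positions from state vectors. -/
def Gmat (n : ℕ) : Matrix (Fin n) (Fin (2 * n)) ℝ :=
  fun i j => if (j : ℕ) = (i : ℕ) then 1 else 0

/-- The data of a multi-robot motion planning (MRMP) problem: `Nb` robots and
obstacles indexed by `Fin Nb` with `R` the set of robots, planning horizon
`T = {1, …, Tb}`, configuration dimension `n` (state dimension `2n`), control
dimension `m`, dynamics matrices `A i`, `B i`, boundary states, control bound
`umax ≥ 0`, exponents `p, q ∈ [1,2]`, and collision radii `r i ≥ 0`. -/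
structure MRMPData (Nb Tb n m : ℕ) where
  R : Finset (Fin Nb)
  A : Fin Nb → Matrix (Fin (2 * n)) (Fin (2 * n)) ℝ
  B : Fin Nb → Matrix (Fin (2 * n)) (Fin m) ℝ
  xinit : Fin Nb → Fin (2 * n) → ℝ
  xgoal : Fin Nb → Fin (2 * n) → ℝ
  umax : ℝ
  p : ℝ
  q : ℝ
  r : Fin Nb → ℝ
  hp : 1 ≤ p ∧ p ≤ 2
  hq : 1 ≤ q ∧ q ≤ 2
  humax : 0 ≤ umax
  hr : ∀ i, 0 ≤ r i

variable {Nb Tb n m : ℕ}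

/-- Constraints (i)–(iii) of the original feasible set `F₀`: dynamics,
boundary conditions, and control bounds. -/
def DynFeas (P : MRMPData Nb Tb n m) (x : Fin Nb → ℕ → Fin (2 * n) → ℝ)
    (u : Fin Nb → ℕ → Fin m → ℝ) : Prop :=
  (∀ i ∈ P.R, ∀ t ∈ Finset.Icc 1 Tb,
      x i (t + 1) = P.A i *ᵥ x i t + P.B i *ᵥ u i t) ∧
  (∀ i ∈ P.R, x i 1 = P.xinit i ∧ x i (Tb + 1) = P.xgoal i) ∧
  (∀ i ∈ P.R, ∀ t ∈ Finset.Icc 1 Tb, pnorm P.p (u i t) ≤ P.umax)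

/-- The original feasible set `F₀`: constraints (i)–(iii) together with the
non-convex collision-avoidance constraints (iv):
`‖G(xᵢ[t] − xⱼ[t])‖₂ ≥ rᵢ + rⱼ` for all `i ≠ j` and `t ∈ T`. -/
def Feas0 (P : MRMPData Nb Tb n m) (x : Fin Nb → ℕ → Fin (2 * n) → ℝ)
    (u : Fin Nb → ℕ → Fin m → ℝ) : Prop :=
  DynFeas P x u ∧
  (∀ i j : Fin Nb, i ≠ j → ∀ t ∈ Finset.Icc 1 Tb,
      P.r i + P.r j ≤ _root_.enorm (Gmat n *ᵥ (x i t - x j t)))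

/-- The relaxed feasible set `F_P` of the (simplified) parabolic relaxation:
constraints (i)–(iii) together with `dᵢ[t] ≥ ‖G xᵢ[t]‖₂²` for every `i`,
and `2(dᵢ[t] + dⱼ[t]) ≥ (rᵢ + rⱼ)² + ‖G(xᵢ[t] + xⱼ[t])‖₂²` for `i ≠ j`. -/
def FeasP (P : MRMPData Nb Tb n m) (x : Fin Nb → ℕ → Fin (2 * n) → ℝ)
    (u : Fin Nb → ℕ → Fin m → ℝ) (d : Fin Nb → ℕ → ℝ) : Prop :=
  DynFeas P x u ∧
  (∀ i : Fin Nb, ∀ t ∈ Finset.Icc 1 Tb, sqnorm (Gmat n *ᵥ x i t) ≤ d i t) ∧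
  (∀ i j : Fin Nb, i ≠ j → ∀ t ∈ Finset.Icc 1 Tb,
      (P.r i + P.r j) ^ 2 + sqnorm (Gmat n *ᵥ (x i t + x j t))
        ≤ 2 * (d i t + d j t))

/-- The objective `J(u) = ∑_{t∈T} ∑_{i∈R} ‖uᵢ[t]‖_q`. -/
noncomputable def obj (P : MRMPData Nb Tb n m) (u : Fin Nb → ℕ → Fin m → ℝ) : ℝ :=
  ∑ t ∈ Finset.Icc 1 Tb, ∑ i ∈ P.R, pnorm P.q (u i t)

/-! The parallelogram law `‖a + b‖² + ‖a − b‖² = 2(‖a‖² + ‖b‖²)` applied to the positions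
`a = G xᵢ[t]`, `b = G xⱼ[t]` turns the collision constraint `‖a − b‖² ≥ (rᵢ + rⱼ)²` into the
parabolic constraint for `d = ‖G x‖²`. Since the objective depends on `u` alone, every feasible
point of `F₀` yields one of `F_P` with the same value, whence the comparison of infima. -/

lemma sq_enorm {n : ℕ} (v : Fin n → ℝ) : _root_.enorm v ^ 2 = sqnorm v :=
  Real.sq_sqrt (Finset.sum_nonneg fun k _ => sq_nonneg (v k))

lemma parallelogram_law_sqnorm {n : ℕ} (v w : Fin n → ℝ) :
    sqnorm (v + w) + sqnorm (v - w) = 2 * (sqnorm v + sqnorm w) := by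
  simp only [sqnorm, Pi.add_apply, Pi.sub_apply, ← Finset.sum_add_distrib, Finset.mul_sum]
  exact Finset.sum_congr rfl fun _ _ => by ring

lemma sq_add_sqnorm_add_le_of_le_enorm_sub {n : ℕ} {r : ℝ} {v w : Fin n → ℝ} (hr : 0 ≤ r)
    (h : r ≤ _root_.enorm (v - w)) : r ^ 2 + sqnorm (v + w) ≤ 2 * (sqnorm v + sqnorm w) := by
  have hsq : r ^ 2 ≤ sqnorm (v - w) := sq_enorm (v - w) ▸ pow_le_pow_left₀ hr h 2
  linarith [parallelogram_law_sqnorm v w]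

lemma feasP_of_feas0 {P : MRMPData Nb Tb n m} {x : Fin Nb → ℕ → Fin (2 * n) → ℝ}
    {u : Fin Nb → ℕ → Fin m → ℝ} (h : Feas0 P x u) :
    FeasP P x u (fun i t => sqnorm (Gmat n *ᵥ x i t)) := by
  obtain ⟨hdyn, hcol⟩ := h
  refine ⟨hdyn, fun _ _ _ => le_rfl, fun i j hij t ht => ?_⟩
  have hsep := hcol i j hij t ht
  rw [Matrix.mulVec_sub] at hsep
  rw [Matrix.mulVec_add]
  exact sq_add_sqnorm_add_le_of_le_enorm_sub (add_nonneg (P.hr i) (P.hr j)) hsep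

/-- **valid relaxation.** For every `(x, u) ∈ F₀`, the triple
`(x, u, d)` with `dᵢ[t] := ‖G xᵢ[t]‖₂²` belongs to the relaxed feasible set
`F_P` (and has the same objective value `J(u)`, as the objective depends on `u`
only). Consequently, the infimum of `J` over `F_P` is at most the infimum of
`J` over `F₀` (infima taken in `ℝ≥0∞`, so that an infimum over an empty
feasible set is `⊤`). -/
theorem parabolic_is_valid_relaxation (P : MRMPData Nb Tb n m) :
    (∀ (x : Fin Nb → ℕ → Fin (2 * n) → ℝ) (u : Fin Nb → ℕ → Fin m → ℝ),
        Feas0 P x u → FeasP P x u (fun i t => sqnorm (Gmat n *ᵥ x i t))) ∧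
    (⨅ s : {s : (Fin Nb → ℕ → Fin (2 * n) → ℝ) × (Fin Nb → ℕ → Fin m → ℝ) ×
              (Fin Nb → ℕ → ℝ) // FeasP P s.1 s.2.1 s.2.2},
        ENNReal.ofReal (obj P s.val.2.1)) ≤
    (⨅ s : {s : (Fin Nb → ℕ → Fin (2 * n) → ℝ) × (Fin Nb → ℕ → Fin m → ℝ) //
              Feas0 P s.1 s.2},
        ENNReal.ofReal (obj P s.val.2)) :=
  ⟨fun _ _ => feasP_of_feas0,
    iInf_mono' fun ⟨(x, u), h⟩ =>
      ⟨⟨(x, u, fun i t => sqnorm (Gmat n *ᵥ x i t)), feasP_of_feas0 h⟩, le_rfl⟩⟩
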